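/- Let p be a prime, f ∈ ℤ[x] not identically zero modulo p, and ζ₀ ∈ ℤ, and set s := s(f,ζ₀). Then p^s divides every coefficient of the polynomial f(ζ₀ + pX) ∈ ℤ[X], and the quotient polynomial f_{1,ζ₀}(X) := f(ζ₀ + pX)/p^s ∈ ℤ[X] is not identically zero modulo p. -/
import Mathlib


open Polynomial

/-- `s(f,ζ₀) = min_{i ≥ 0} (i + ord_p(f⁽ⁱ⁾(ζ₀)/i!))`, where `f⁽ⁱ⁾(ζ₀)/i!` is the
coefficient of `x^i` in `f(ζ₀+x)`; the minimum ranges over `i` with nonzero coefficient. -/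
noncomputable def sVal (p : ℕ) (f : Polynomial ℤ) (ζ₀ : ℤ) : ℕ :=
  sInf {n : ℕ | ∃ i : ℕ, (f.comp (X + C ζ₀)).coeff i ≠ 0 ∧
    n = i + padicValInt p ((f.comp (X + C ζ₀)).coeff i)}

/-- Coefficientwise exact division of a polynomial by a constant. -/
noncomputable def divC (c : ℤ) (f : Polynomial ℤ) : Polynomial ℤ :=
  f.sum fun n a => C (a / c) * X ^ n

/-- `f_{1,ζ₀}(x) := f(ζ₀ + p·x) / p^{s(f,ζ₀)}`. -/
noncomputable def fOne (p : ℕ) (f : Polynomial ℤ) (ζ₀ : ℤ) : Polynomial ℤ :=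
  divC ((p : ℤ) ^ sVal p f ζ₀) (f.comp (C (p : ℤ) * X + C ζ₀))

lemma coeff_comp_C_mul_X (g : Polynomial ℤ) (c : ℤ) (i : ℕ) :
    (g.comp (C c * X)).coeff i = c ^ i * g.coeff i := by
  induction g using Polynomial.induction_on' with
  | add p q hp hq => simp only [add_comp, coeff_add, hp, hq, mul_add]
  | monomial n a =>
    rw [monomial_comp, mul_pow, ← C_pow, ← mul_assoc, ← C_mul]
    simp only [coeff_monomial, C_mul_X_pow_eq_monomial]
    split_ifs with h
    · subst h; ring
    · ring

lemma coeff_divC (c : ℤ) (f : Polynomial ℤ) (n : ℕ) :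
    (divC c f).coeff n = f.coeff n / c := by
  rw [divC, Polynomial.sum, finset_sum_coeff]
  simp only [coeff_C_mul, coeff_X_pow, mul_ite, mul_one, mul_zero]
  rw [Finset.sum_ite_eq f.support n fun m => f.coeff m / c]
  split_ifs with h
  · rfl
  · simp [notMem_support_iff.mp h]

/-- `p^{s(f,ζ₀)}` divides every coefficient of `f(ζ₀ + pX)`, and the quotient
polynomial `f_{1,ζ₀} = f(ζ₀ + pX)/p^{s(f,ζ₀)}` is not identically zero mod `p`. -/
theorem fOne_well_defined (p : ℕ) (hp : p.Prime)
    (f : Polynomial ℤ) (hf : f.map (Int.castRingHom (ZMod p)) ≠ 0) (ζ₀ : ℤ) :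
    (∀ i : ℕ, (p : ℤ) ^ sVal p f ζ₀ ∣ (f.comp (C (p : ℤ) * X + C ζ₀)).coeff i) ∧
    (fOne p f ζ₀).map (Int.castRingHom (ZMod p)) ≠ 0 := by
  haveI := Fact.mk hp
  have hpz : (p : ℤ) ≠ 0 := Int.natCast_ne_zero.mpr hp.ne_zero
  set g : Polynomial ℤ := f.comp (X + C ζ₀) with hgdef
  have hcomp : f.comp (C (p : ℤ) * X + C ζ₀) = g.comp (C (p : ℤ) * X) := by
    rw [hgdef, comp_assoc]
    simp [add_comp]
  -- g ≠ 0
  have hfne : f ≠ 0 := fun h => hf (by simp [h])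
  have hgne : g ≠ 0 := by
    intro h
    apply hfne
    have : g.comp (X - C ζ₀) = f := by
      rw [hgdef, comp_assoc]
      simp [add_comp, sub_comp]
    rw [h, zero_comp] at this
    exact this.symm
  -- the defining set of sVal is nonempty
  set S : Set ℕ := {n : ℕ | ∃ i : ℕ, g.coeff i ≠ 0 ∧
    n = i + padicValInt p (g.coeff i)} with hSdef
  have hsval : sVal p f ζ₀ = sInf S := rfl
  have hSne : S.Nonempty :=
    ⟨g.natDegree + padicValInt p (g.coeff g.natDegree),
      g.natDegree, mt leadingCoeff_eq_zero.mp hgne, rfl⟩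
  set s : ℕ := sVal p f ζ₀ with hs
  -- divisibility
  have hdvd : ∀ i : ℕ, (p : ℤ) ^ s ∣ (f.comp (C (p : ℤ) * X + C ζ₀)).coeff i := by
    intro i
    rw [hcomp, coeff_comp_C_mul_X]
    by_cases h : g.coeff i = 0
    · simp [h]
    · have hle : s ≤ i + padicValInt p (g.coeff i) :=
        Nat.sInf_le ⟨i, h, rfl⟩
      calc (p : ℤ) ^ s ∣ (p : ℤ) ^ (i + padicValInt p (g.coeff i)) :=
            pow_dvd_pow _ hle
        _ ∣ (p : ℤ) ^ i * g.coeff i := by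
            rw [pow_add]
            exact mul_dvd_mul_left _ (padicValInt_dvd (g.coeff i))
  refine ⟨hdvd, ?_⟩
  -- witness index
  obtain ⟨i₀, hi₀ne, hi₀⟩ : ∃ i : ℕ, g.coeff i ≠ 0 ∧
      s = i + padicValInt p (g.coeff i) := Nat.sInf_mem hSne
  set v : ℕ := padicValInt p (g.coeff i₀) with hv
  obtain ⟨b, hb⟩ := padicValInt_dvd (p := p) (g.coeff i₀)
  have hbnd : ¬ (p : ℤ) ∣ b := by
    intro ⟨c, hc⟩
    have : (p : ℤ) ^ (v + 1) ∣ g.coeff i₀ := ⟨c, by rw [hb, hc, pow_succ]; ring⟩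
    rcases (padicValInt_dvd_iff (p := p) (v + 1) (g.coeff i₀)).mp this with h | h
    · exact hi₀ne h
    · omega
  have hcoeff : (fOne p f ζ₀).coeff i₀ = b := by
    rw [fOne, coeff_divC, hcomp, coeff_comp_C_mul_X, hb, ← hv, ← mul_assoc,
      ← pow_add, ← hi₀, ← hs]
    exact Int.mul_ediv_cancel_left b (pow_ne_zero s hpz)
  intro hmap
  have : ((fOne p f ζ₀).map (Int.castRingHom (ZMod p))).coeff i₀ = 0 := by
    rw [hmap]; simp
  rw [coeff_map, hcoeff] at this
  exact hbnd ((ZMod.intCast_zmod_eq_zero_iff_dvd b p).mp this)
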